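/- Let S ⊆ {1, …, r}, let c_i > 0 for each i ∈ S, and set Y = Σ_{i∈S} c_i x_i. Then for every w ∈ W and every i ∈ S with w x_i ≠ x_i, one has (Y, w x_i) < (Y, x_i). -/

import Mathlib

/-!
STATEMENT 9: With `Φ, Φ⁺, Δ = {α_1, …, α_r}, W` as usual and `x_1, …, x_r` the
fundamental coweights (the basis of `V` characterized by `2(x_i, α_j)/(α_j, α_j) = δ_ij`):
let `S ⊆ {1, …, r}`, let `c_i > 0` for each `i ∈ S`, and set `Y = Σ_{i∈S} c_i x_i`.
Then for every `w ∈ W` and every `i ∈ S` with `w x_i ≠ x_i`, one has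
`(Y, w x_i) < (Y, x_i)`.
(Here the simple roots are indexed by themselves, so the coweights are given by a map
`x : V → V` with `2(x α, β)/(β, β) = δ_{αβ}` for `α, β ∈ Δ`, and `x` restricted to `Δ`
is a basis of `V`.)
-/

open scoped RealInnerProductSpace

namespace Stmt9

noncomputable section

/-- Data of a finite reduced crystallographic root system `Φ` spanning the real inner
product space `V`, together with a choice of positive roots `Pos` (so `Φ = Pos ⊔ -Pos`)
and the corresponding simple roots `Δ` (a linearly independent set of positive roots such
that every positive root is a nonnegative linear combination of elements of `Δ`). -/
structure RootSystemData (V : Type*) [NormedAddCommGroup V] [InnerProductSpace ℝ V] where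
  Φ : Set V
  Pos : Set V
  Δ : Set V
  finite : Φ.Finite
  nonzero : ∀ α ∈ Φ, α ≠ 0
  spans : Submodule.span ℝ Φ = ⊤
  neg_mem : ∀ α ∈ Φ, -α ∈ Φ
  reduced : ∀ α ∈ Φ, ∀ t : ℝ, t • α ∈ Φ → t = 1 ∨ t = -1
  crystallographic : ∀ α ∈ Φ, ∀ β ∈ Φ, ∃ n : ℤ, 2 * ⟪β, α⟫ / ⟪α, α⟫ = (n : ℝ)
  reflect_mem : ∀ α ∈ Φ, ∀ β ∈ Φ, β - (2 * ⟪β, α⟫ / ⟪α, α⟫) • α ∈ Φ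
  pos_sub : Pos ⊆ Φ
  pos_iff : ∀ α ∈ Φ, (α ∈ Pos ↔ -α ∉ Pos)
  simple_sub : Δ ⊆ Pos
  simple_indep : LinearIndependent ℝ (fun a : Δ => (a : V))
  simple_gen : ∀ α ∈ Pos, ∃ c : V →₀ ℝ, ↑c.support ⊆ Δ ∧ (∀ β, 0 ≤ c β) ∧
    α = c.sum fun β r => r • β

variable {V : Type*} [NormedAddCommGroup V] [InnerProductSpace ℝ V] [FiniteDimensional ℝ V]

/-- The orthogonal reflection `s_α` in the hyperplane orthogonal to `α`. -/
def sref (α : V) : V ≃ₗᵢ[ℝ] V := Submodule.reflection (Submodule.span ℝ {α})ᗮ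

/-- The Weyl group `W`, generated by the reflections in the simple roots (a group of
linear isometries of `V`, so it preserves the inner product). -/
def Weyl (D : RootSystemData V) : Subgroup (V ≃ₗᵢ[ℝ] V) :=
  Subgroup.closure (sref '' D.Δ)

/-- The length function `ℓ` on `W` with respect to the simple reflections:
the least length of an expression as a product of simple reflections. -/
def len (D : RootSystemData V) (u : V ≃ₗᵢ[ℝ] V) : ℕ :=
  sInf {n | ∃ l : List (V ≃ₗᵢ[ℝ] V), l.length = n ∧ (∀ s ∈ l, s ∈ sref '' D.Δ) ∧ l.prod = u}

/-- An element `δ ∈ V` is dominant if `(α, δ) ≥ 0` for all simple roots `α`. -/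
def IsDominant (D : RootSystemData V) (δ : V) : Prop := ∀ α ∈ D.Δ, 0 ≤ ⟪α, δ⟫

/-! ### Auxiliary development -/

section Aux

lemma inner_self_pos' {α : V} (hα : α ≠ 0) : 0 < ⟪α, α⟫ :=
  not_le.mp fun h => hα (real_inner_self_nonpos.mp h)

lemma sref_apply' {α : V} (hα : α ≠ 0) (v : V) :
    sref α v = v - (2 * ⟪v, α⟫ / ⟪α, α⟫) • α := by
  rw [sref, Submodule.reflection_orthogonal_apply, Submodule.reflection_singleton_apply]
  have hnorm : ((‖α‖ ^ 2 : ℝ) : ℝ) = ⟪α, α⟫ := (real_inner_self_eq_norm_sq α).symm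
  simp only [RCLike.ofReal_real_eq_id, id_eq]
  rw [hnorm, real_inner_comm α v]
  match_scalars <;> ring

lemma sref_self {α : V} : sref α α = -α :=
  Submodule.reflection_orthogonalComplement_singleton_eq_neg α

lemma sref_mul_self (α : V) : sref α * sref α = 1 :=
  Submodule.reflection_mul_reflection _

lemma sref_conj {α : V} (hα : α ≠ 0) (g : V ≃ₗᵢ[ℝ] V) :
    sref (g α) = g * sref α * g⁻¹ := by
  have hgα : g α ≠ 0 := by
    intro h
    exact hα (by simpa using congrArg g.symm h)
  ext v
  have h1 : ⟪(g⁻¹ : V ≃ₗᵢ[ℝ] V) v, α⟫ = ⟪v, g α⟫ := by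
    have := g.inner_map_map ((g⁻¹ : V ≃ₗᵢ[ℝ] V) v) α
    simpa [LinearIsometryEquiv.inv_def] using this.symm
  have h2 : ⟪α, α⟫ = ⟪g α, g α⟫ := (g.inner_map_map α α).symm
  simp only [LinearIsometryEquiv.coe_mul, Function.comp_apply]
  rw [sref_apply' hgα, sref_apply' hα, h1, h2]
  simp [LinearIsometryEquiv.inv_def, map_sub, map_smul]

variable (D : RootSystemData V)

lemma simple_sub_Phi : D.Δ ⊆ D.Φ := D.simple_sub.trans D.pos_sub

lemma simple_ne_zero {α : V} (hα : α ∈ D.Δ) : α ≠ 0 :=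
  D.nonzero α (simple_sub_Phi D hα)

lemma simple_inner_pos {α : V} (hα : α ∈ D.Δ) : 0 < ⟪α, α⟫ :=
  inner_self_pos' (simple_ne_zero D hα)

lemma neg_of_not_pos {β : V} (hβ : β ∈ D.Φ) (h : β ∉ D.Pos) : -β ∈ D.Pos := by
  have := D.pos_iff (-β) (D.neg_mem β hβ)
  rw [this, neg_neg]
  exact h

/-- The nonnegative cone generated by the simple roots. -/
def QPos : Set V :=
  {v | ∃ d : V →₀ ℝ, ↑d.support ⊆ D.Δ ∧ (∀ β, 0 ≤ d β) ∧ v = d.sum fun β r => r • β}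

lemma QPos.zero_mem : (0 : V) ∈ QPos D :=
  ⟨0, by simp, fun β => le_refl 0, by simp⟩

lemma QPos.add_smul_mem {v : V} (hv : v ∈ QPos D) {β : V} (hβ : β ∈ D.Δ) {k : ℝ}
    (hk : 0 ≤ k) : v + k • β ∈ QPos D := by
  classical
  obtain ⟨d, hsupp, hpos, hsum⟩ := hv
  refine ⟨d + Finsupp.single β k, ?_, ?_, ?_⟩
  · intro γ hγ
    have hγ2 : γ ∈ (d + Finsupp.single β k).support := hγ
    rcases Finset.mem_union.mp (Finsupp.support_add hγ2) with h | h
    · exact hsupp h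
    · have := Finsupp.support_single_subset h
      simp only [Finset.mem_singleton] at this
      subst this; exact hβ
  · intro γ
    simp only [Finsupp.add_apply]
    have := hpos γ
    rcases eq_or_ne γ β with rfl | hne
    · simp only [Finsupp.single_eq_same]; linarith
    · simp [Finsupp.single_eq_of_ne' (Ne.symm hne), this]
  · rw [Finsupp.sum_add_index' (by simp) (fun a b₁ b₂ => add_smul b₁ b₂ a)]
    rw [Finsupp.sum_single_index (by simp), hsum]

/-- Linear combination as a linear map, for uniqueness arguments. -/
lemma tot_eq_sum (d : V →₀ ℝ) :
    Finsupp.linearCombination ℝ (id : V → V) d = d.sum fun β r => r • β := by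
  rw [Finsupp.linearCombination_apply]; rfl

lemma coeff_unique {d₁ d₂ : V →₀ ℝ} (h₁ : ↑d₁.support ⊆ D.Δ) (h₂ : ↑d₂.support ⊆ D.Δ)
    (h : (d₁.sum fun β r => r • β) = d₂.sum fun β r => r • β) : d₁ = d₂ := by
  classical
  have hind := (linearIndepOn_iff (v := (id : V → V)) (s := D.Δ)).mp D.simple_indep
  have hmem : d₁ - d₂ ∈ Finsupp.supported ℝ ℝ D.Δ := by
    rw [Finsupp.mem_supported]
    refine subset_trans ?_ (Set.union_subset h₁ h₂)
    intro γ hγ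
    rcases Finset.mem_union.mp ((Finsupp.support_sub (f := d₁) (g := d₂)) (by exact_mod_cast hγ)) with h | h
    · exact Or.inl h
    · exact Or.inr h
  have htot : Finsupp.linearCombination ℝ (id : V → V) (d₁ - d₂) = 0 := by
    rw [map_sub, tot_eq_sum, tot_eq_sum, h, sub_self]
  have := hind _ hmem htot
  exact sub_eq_zero.mp this

lemma dominant_inner_nonneg {lam : V} (hlam : IsDominant D lam) {p : V} (hp : p ∈ D.Pos) :
    0 ≤ ⟪lam, p⟫ := by
  obtain ⟨d, hsupp, hpos, hsum⟩ := D.simple_gen p hp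
  rw [hsum, Finsupp.sum, inner_sum]
  refine Finset.sum_nonneg fun β hβ => ?_
  rw [real_inner_smul_right]
  have hβΔ : β ∈ D.Δ := hsupp hβ
  exact mul_nonneg (hpos β) (by rw [real_inner_comm]; exact hlam β hβΔ)

/-- A simple reflection permutes the positive roots other than itself. -/
lemma simple_reflect_pos {γ : V} (hγ : γ ∈ D.Δ) {β : V} (hβ : β ∈ D.Pos) (hne : β ≠ γ) :
    sref γ β ∈ D.Pos := by
  classical
  have hγΦ : γ ∈ D.Φ := simple_sub_Phi D hγ
  have hγ0 : γ ≠ 0 := simple_ne_zero D hγ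
  have hβΦ : β ∈ D.Φ := D.pos_sub hβ
  set k : ℝ := 2 * ⟪β, γ⟫ / ⟪γ, γ⟫ with hk
  have hsrefβ : sref γ β = β - k • γ := sref_apply' hγ0 β
  have hsrefΦ : sref γ β ∈ D.Φ := by rw [hsrefβ]; exact D.reflect_mem γ hγΦ β hβΦ
  obtain ⟨d, hsupp, hpos, hsum⟩ := D.simple_gen β hβ
  -- β has a positive coefficient at some simple root ≠ γ
  obtain ⟨δ, hδs, hδne⟩ : ∃ δ ∈ d.support, δ ≠ γ := by
    by_contra hcon
    push_neg at hcon
    have hsub : d.support ⊆ {γ} := fun δ hδ => Finset.mem_singleton.mpr (hcon δ hδ)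
    have hβeq : β = d γ • γ := by
      rw [hsum, Finsupp.sum]
      rcases Finset.subset_singleton_iff.mp hsub with h | h
      · simp only [h, Finset.sum_empty]
        have : d γ = 0 := Finsupp.notMem_support_iff.mp (by simp [h])
        simp [this]
      · simp [h]
    have := D.reduced γ hγΦ (d γ) (by rw [← hβeq]; exact hβΦ)
    rcases this with h1 | h1
    · exact hne (by rw [hβeq, h1, one_smul])
    · have := hpos γ; rw [h1] at this; linarith
  have hδΔ : δ ∈ D.Δ := hsupp hδs
  have hδpos : 0 < d δ := lt_of_le_of_ne (hpos δ) (Ne.symm (Finsupp.mem_support_iff.mp hδs))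
  by_contra hnp
  have hnegPos : -(sref γ β) ∈ D.Pos := neg_of_not_pos D hsrefΦ hnp
  obtain ⟨d2, hsupp2, hpos2, hsum2⟩ := D.simple_gen _ hnegPos
  -- two representations of `sref γ β`
  have e1supp : ↑(d - Finsupp.single γ k).support ⊆ D.Δ := by
    intro a ha
    rcases Finset.mem_union.mp (Finsupp.support_sub (by exact_mod_cast ha)) with h | h
    · exact hsupp h
    · have := Finsupp.support_single_subset h
      simp only [Finset.mem_singleton] at this
      subst this; exact hγ
  have e2supp : ↑(-d2).support ⊆ D.Δ := by
    intro a ha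
    rw [Finsupp.support_neg] at ha
    exact hsupp2 ha
  have hsums : ((d - Finsupp.single γ k).sum fun b r => r • b)
      = ((-d2 : V →₀ ℝ).sum fun b r => r • b) := by
    have h1 : ((d - Finsupp.single γ k).sum fun b r => r • b) = β - k • γ := by
      rw [← tot_eq_sum, map_sub, tot_eq_sum, ← hsum, Finsupp.linearCombination_single]
      simp
    have h2 : ((-d2 : V →₀ ℝ).sum fun b r => r • b) = sref γ β := by
      rw [← tot_eq_sum, map_neg, tot_eq_sum, ← hsum2]
      simp
    rw [h1, h2, hsrefβ]
  have heq := coeff_unique D e1supp e2supp hsums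
  have := congrArg (fun f : V →₀ ℝ => f δ) heq
  simp only [Finsupp.sub_apply, Finsupp.neg_apply,
    Finsupp.single_eq_of_ne' (Ne.symm hδne), sub_zero] at this
  have := hpos2 δ
  linarith [hδpos]

/-- `l` is a word in the simple reflections. -/
def IsWord (l : List (V ≃ₗᵢ[ℝ] V)) : Prop := ∀ s ∈ l, s ∈ sref '' D.Δ

lemma sref_inv (α : V) : (sref α)⁻¹ = sref α := by rw [sref]; exact Submodule.reflection_inv

lemma sref_apply_mem_Phi {γ : V} (hγ : γ ∈ D.Δ) {β : V} (hβ : β ∈ D.Φ) : sref γ β ∈ D.Φ := by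
  rw [sref_apply' (simple_ne_zero D hγ)]
  exact D.reflect_mem γ (simple_sub_Phi D hγ) β hβ

lemma word_apply_mem_Phi : ∀ l : List (V ≃ₗᵢ[ℝ] V), IsWord D l → ∀ β ∈ D.Φ, l.prod β ∈ D.Φ
  | [] => by intro _ β hβ; simpa using hβ
  | s :: t => by
    intro hl β hβ
    obtain ⟨γ, hγ, rfl⟩ := hl s (List.mem_cons_self)
    have ht : IsWord D t := fun u hu => hl u (List.mem_cons_of_mem _ hu)
    rw [List.prod_cons, LinearIsometryEquiv.coe_mul, Function.comp_apply]
    exact sref_apply_mem_Phi D hγ (word_apply_mem_Phi t ht β hβ)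

lemma word_prod_mem_weyl {l : List (V ≃ₗᵢ[ℝ] V)} (hl : IsWord D l) : l.prod ∈ Weyl D :=
  Subgroup.list_prod_mem _ fun s hs => Subgroup.subset_closure (hl s hs)

lemma word_reverse {l : List (V ≃ₗᵢ[ℝ] V)} (hl : IsWord D l) :
    IsWord D l.reverse ∧ l.reverse.prod = (l.prod)⁻¹ := by
  constructor
  · intro s hs; exact hl s (List.mem_reverse.mp hs)
  · rw [List.prod_inv_reverse]
    congr 1
    congr 1
    conv_lhs => rw [← List.map_id l]
    refine List.map_congr_left fun s hs => ?_
    obtain ⟨γ, _, rfl⟩ := hl s hs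
    exact (sref_inv γ).symm

lemma exists_word {w : V ≃ₗᵢ[ℝ] V} (hw : w ∈ Weyl D) :
    ∃ l, IsWord D l ∧ l.prod = w := by
  induction hw using Subgroup.closure_induction with
  | mem s hs => exact ⟨[s], fun u hu => by simpa using (List.mem_singleton.mp hu ▸ hs), by simp⟩
  | one => exact ⟨[], fun u hu => absurd hu List.not_mem_nil, by simp⟩
  | mul a b _ _ ha hb =>
    obtain ⟨l₁, hl₁, hp₁⟩ := ha
    obtain ⟨l₂, hl₂, hp₂⟩ := hb
    exact ⟨l₁ ++ l₂, fun u hu => (List.mem_append.mp hu).elim (hl₁ u) (hl₂ u),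
      by rw [List.prod_append, hp₁, hp₂]⟩
  | inv a _ ha =>
    obtain ⟨l, hl, hp⟩ := ha
    obtain ⟨h1, h2⟩ := word_reverse D hl
    exact ⟨l.reverse, h1, by rw [h2, hp]⟩

lemma len_le {w : V ≃ₗᵢ[ℝ] V} {l : List (V ≃ₗᵢ[ℝ] V)} (hl : IsWord D l) (hp : l.prod = w) :
    len D w ≤ l.length :=
  Nat.sInf_le ⟨l, rfl, hl, hp⟩

lemma exists_reduced {w : V ≃ₗᵢ[ℝ] V} (hw : w ∈ Weyl D) :
    ∃ l, IsWord D l ∧ l.prod = w ∧ l.length = len D w := by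
  obtain ⟨l, hl, hp⟩ := exists_word D hw
  have hne : {n | ∃ l : List (V ≃ₗᵢ[ℝ] V), l.length = n ∧ (∀ s ∈ l, s ∈ sref '' D.Δ) ∧
      l.prod = w}.Nonempty := ⟨l.length, l, rfl, hl, hp⟩
  obtain ⟨l', h1, h2, h3⟩ := Nat.sInf_mem hne
  exact ⟨l', h2, h3, h1⟩

/-- The exchange argument: if a word sends the simple root `γ` to a non-positive root,
then multiplying by `s_γ` shortens the word. -/
lemma exchange : ∀ l : List (V ≃ₗᵢ[ℝ] V), IsWord D l → ∀ γ ∈ D.Δ, l.prod γ ∉ D.Pos →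
    ∃ l', IsWord D l' ∧ l'.length + 1 = l.length ∧ l'.prod = l.prod * sref γ := by
  intro l
  induction l with
  | nil =>
    intro _ γ hγ hnp
    exact absurd (by simpa using D.simple_sub hγ) (by simpa using hnp)
  | cons s t IH =>
    intro hl γ hγΔ hnp
    obtain ⟨δ, hδΔ, rfl⟩ := hl s (List.mem_cons_self)
    have ht : IsWord D t := fun u hu => hl u (List.mem_cons_of_mem _ hu)
    by_cases hc : t.prod γ ∈ D.Pos
    · have hsp : (List.prod (sref δ :: t)) γ = sref δ (t.prod γ) := by
        rw [List.prod_cons, LinearIsometryEquiv.coe_mul, Function.comp_apply]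
      have hnotpos : sref δ (t.prod γ) ∉ D.Pos := by rw [← hsp]; exact hnp
      have heqδ : t.prod γ = δ := by
        by_contra hne
        exact hnotpos (simple_reflect_pos D hδΔ hc hne)
      have hγ0 : γ ≠ 0 := simple_ne_zero D hγΔ
      have hconj : sref δ = t.prod * sref γ * (t.prod)⁻¹ := by
        rw [← heqδ]; exact sref_conj hγ0 t.prod
      refine ⟨t, ht, by simp, ?_⟩
      rw [List.prod_cons, hconj]
      have h2 := sref_mul_self γ
      calc t.prod = t.prod * (sref γ * sref γ) := by rw [h2, mul_one]
        _ = t.prod * sref γ * (t.prod)⁻¹ * t.prod * sref γ := by group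
    · obtain ⟨l'', hw'', hlen'', hp''⟩ := IH ht γ hγΔ hc
      refine ⟨sref δ :: l'', ?_, by simp [← hlen''], ?_⟩
      · intro u hu
        rcases List.mem_cons.mp hu with rfl | hu
        · exact ⟨δ, hδΔ, rfl⟩
        · exact hw'' u hu
      · rw [List.prod_cons, List.prod_cons, hp'', ← mul_assoc]

/-- Key lemma: for dominant `lam` and `w` in the Weyl group, `lam - w lam` lies in the
nonnegative cone generated by the simple roots. -/
lemma dominant_sub_smul_mem :
    ∀ n (w : V ≃ₗᵢ[ℝ] V), w ∈ Weyl D → len D w = n →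
      ∀ lam : V, IsDominant D lam → lam - w lam ∈ QPos D := by
  intro n
  induction n using Nat.strong_induction_on with
  | _ n IH =>
    intro w hw hlen lam hdom
    obtain ⟨l, hl, hp, hll⟩ := exists_reduced D hw
    rcases l with _ | ⟨s, t⟩
    · have hw1 : w = 1 := by rw [← hp]; simp
      rw [hw1]
      simpa using QPos.zero_mem D
    · obtain ⟨β, hβΔ, rfl⟩ := hl s (List.mem_cons_self)
      have ht : IsWord D t := fun u hu => hl u (List.mem_cons_of_mem _ hu)
      set v := t.prod with hv
      have hvW : v ∈ Weyl D := word_prod_mem_weyl D ht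
      have hβ0 : β ≠ 0 := simple_ne_zero D hβΔ
      have hβΦ : β ∈ D.Φ := simple_sub_Phi D hβΔ
      have hn : t.length + 1 = n := by
        simpa [hlen] using hll
      have hlenv : len D v ≤ t.length := len_le D ht rfl
      obtain ⟨hrw, hrp⟩ := word_reverse D ht
      -- `v⁻¹ β` is a positive root
      have hppos : v⁻¹ β ∈ D.Pos := by
        by_contra hnp
        have hnp' : t.reverse.prod β ∉ D.Pos := by rw [hrp]; exact hnp
        obtain ⟨l2, hl2, hlen2, hp2⟩ := exchange D t.reverse hrw β hβΔ hnp'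
        have hw_inv : l2.prod = w⁻¹ := by
          rw [hp2, hrp, ← hp, List.prod_cons, mul_inv_rev, sref_inv]
        obtain ⟨hrw2, hrp2⟩ := word_reverse D hl2
        have hlew : len D w ≤ l2.reverse.length :=
          len_le D hrw2 (by rw [hrp2, hw_inv, inv_inv])
        rw [List.length_reverse] at hlew
        rw [List.length_reverse] at hlen2
        omega
      set k : ℝ := 2 * ⟪v lam, β⟫ / ⟪β, β⟫ with hk
      have hinner : ⟪v lam, β⟫ = ⟪lam, v⁻¹ β⟫ := by
        have h1 := v.inner_map_map lam (v⁻¹ β)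
        have h2 : v (v⁻¹ β) = β := by
          rw [LinearIsometryEquiv.inv_def]
          exact v.apply_symm_apply β
        rw [h2] at h1
        exact h1
      have hknn : 0 ≤ k := by
        have h1 : 0 ≤ ⟪lam, v⁻¹ β⟫ := dominant_inner_nonneg D hdom hppos
        have h2 : 0 < ⟪β, β⟫ := simple_inner_pos D hβΔ
        rw [hk, hinner]
        positivity
      have hIH : lam - v lam ∈ QPos D :=
        IH (len D v) (by omega) v hvW rfl lam hdom
      have hwlam : w lam = v lam - k • β := by
        rw [← hp, List.prod_cons, LinearIsometryEquiv.coe_mul, Function.comp_apply,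
          sref_apply' hβ0]
      have heq : lam - w lam = (lam - v lam) + k • β := by rw [hwlam]; abel
      rw [heq]
      exact QPos.add_smul_mem D hIH hβΔ hknn

end Aux

open scoped Classical in
theorem inner_fundamental_coweight_lt (D : RootSystemData V)
    (x : V → V)
    (hx : ∀ α ∈ D.Δ, ∀ β ∈ D.Δ, 2 * ⟪x α, β⟫ / ⟪β, β⟫ = if α = β then (1 : ℝ) else 0)
    (hxindep : LinearIndependent ℝ (fun a : D.Δ => x (a : V)))
    (hxspan : Submodule.span ℝ (x '' D.Δ) = ⊤)
    (S : Finset V) (hS : ↑S ⊆ D.Δ)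
    (c : V → ℝ) (hc : ∀ i ∈ S, 0 < c i)
    (Y : V) (hY : Y = ∑ i ∈ S, c i • x i)
    (w : V ≃ₗᵢ[ℝ] V) (hwW : w ∈ Weyl D)
    (i : V) (hi : i ∈ S) (hne : w (x i) ≠ x i) :
    ⟪Y, w (x i)⟫ < ⟪Y, x i⟫ := by
  have hiΔ : i ∈ D.Δ := hS hi
  -- inner products of coweights with simple roots
  have hinner : ∀ j ∈ D.Δ, ∀ β ∈ D.Δ, ⟪x j, β⟫ = if j = β then ⟪β, β⟫ / 2 else 0 := by
    intro j hj β hβ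
    have h := hx j hj β hβ
    have hβ0 : (0:ℝ) < ⟪β, β⟫ := simple_inner_pos D hβ
    rw [div_eq_iff (ne_of_gt hβ0)] at h
    rcases eq_or_ne j β with rfl | hne
    · rw [if_pos rfl] at h ⊢
      linarith
    · rw [if_neg hne] at h ⊢
      linarith
  -- `x i` is dominant
  have hdom : IsDominant D (x i) := by
    intro α hα
    rw [real_inner_comm, hinner i hiΔ α hα]
    rcases eq_or_ne i α with rfl | hne
    · rw [if_pos rfl]
      linarith [simple_inner_pos D hα]
    · rw [if_neg hne]
  -- the key decomposition
  obtain ⟨d, hsupp, hdnn, hsum⟩ :=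
    dominant_sub_smul_mem D (len D w) w hwW rfl (x i) hdom
  -- inner products of `Y` with simple roots
  have hYβ : ∀ β ∈ D.Δ, ⟪Y, β⟫ = if β ∈ S then c β * (⟪β, β⟫ / 2) else 0 := by
    intro β hβ
    rw [hY, sum_inner]
    have hterm : ∀ j ∈ S, ⟪c j • x j, β⟫ = if j = β then c j * (⟪β, β⟫ / 2) else 0 := by
      intro j hj
      rw [real_inner_smul_left, hinner j (hS hj) β hβ]
      rcases eq_or_ne j β with rfl | hne
      · simp
      · simp [if_neg hne]
    rw [Finset.sum_congr rfl hterm, Finset.sum_ite_eq' S β (fun j => c j * (⟪β, β⟫ / 2))]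
  have hYβnn : ∀ β ∈ D.Δ, 0 ≤ ⟪Y, β⟫ := by
    intro β hβ
    rw [hYβ β hβ]
    split_ifs with h
    · have := hc β h
      have := simple_inner_pos D hβ
      positivity
    · exact le_refl _
  have hYSpos : ∀ β ∈ S, 0 < ⟪Y, β⟫ := by
    intro β hβ
    rw [hYβ β (hS hβ), if_pos hβ]
    have h1 := hc β hβ
    have h2 := simple_inner_pos D (hS hβ)
    positivity
  set q : V := x i - w (x i) with hq
  have hqsum : ⟪Y, q⟫ = ∑ β ∈ d.support, d β * ⟪Y, β⟫ := by
    rw [hsum, Finsupp.sum, inner_sum]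
    exact Finset.sum_congr rfl fun β hβ => real_inner_smul_right _ _ _
  have hterm_nn : ∀ β ∈ d.support, 0 ≤ d β * ⟪Y, β⟫ := fun β hβ =>
    mul_nonneg (hdnn β) (hYβnn β (hsupp hβ))
  have hqnn : 0 ≤ ⟪Y, q⟫ := hqsum ▸ Finset.sum_nonneg hterm_nn
  have hsub : ⟪Y, q⟫ = ⟪Y, x i⟫ - ⟪Y, w (x i)⟫ := by
    rw [hq, inner_sub_right]
  rcases lt_or_eq_of_le hqnn with h | h
  · linarith [hsub]
  · exfalso
    have hzero : ∀ β ∈ d.support, d β * ⟪Y, β⟫ = 0 :=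
      (Finset.sum_eq_zero_iff_of_nonneg hterm_nn).mp (by rw [← hqsum]; exact h.symm)
    have hnotS : ∀ β ∈ d.support, β ∉ S := by
      intro β hβ hβS
      have h1 := hzero β hβ
      have h2 : d β ≠ 0 := Finsupp.mem_support_iff.mp hβ
      have h3 := hYSpos β hβS
      rcases mul_eq_zero.mp h1 with h' | h'
      · exact h2 h'
      · exact absurd h' (ne_of_gt h3)
    have hxiq : ⟪x i, q⟫ = 0 := by
      rw [hsum, Finsupp.sum, inner_sum]
      refine Finset.sum_eq_zero fun β hβ => ?_
      rw [real_inner_smul_right, hinner i hiΔ β (hsupp hβ)]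
      have hneq : i ≠ β := fun he => hnotS β hβ (he ▸ hi)
      rw [if_neg hneq, mul_zero]
    have hwxiq : ⟪w (x i), q⟫ = 0 := by
      have h1 : ⟪x i, w (x i)⟫ = ⟪x i, x i⟫ := by
        have h' := hxiq
        rw [hq, inner_sub_right] at h'
        linarith
      have h2 : ⟪w (x i), w (x i)⟫ = ⟪x i, x i⟫ := w.inner_map_map (x i) (x i)
      rw [hq, inner_sub_right, real_inner_comm (x i) (w (x i)), h1, h2, sub_self]
    have hqq : ⟪q, q⟫ = 0 := by
      conv_lhs => rw [hq]
      rw [inner_sub_left, hxiq, hwxiq, sub_self]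
    have hq0 : q = 0 := inner_self_eq_zero.mp hqq
    rw [hq, sub_eq_zero] at hq0
    exact hne hq0.symm

end

end Stmt9
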